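/- arXiv:2206.09346 — 6 statements merged into one kernel-verified Lean document; each statement's English description precedes it below -/
import Mathlib

section
/- (Equation (4), true-positive-rate identity.) Under the SCAR assumption, if μ(B ∩ C) > 0, then for every classifier G ∈ 𝒢 the conditional probability of predicting positive among positives in group C satisfies μ(G | B ∩ C) = (∫_{G ∩ C} f dμ) / (c · μ(B ∩ C)). -/
open MeasureTheory



private lemma aux_int {Ω : Type*} {m0 : MeasurableSpace Ω} (μ : MeasureTheory.Measure Ω)
    [MeasureTheory.IsFiniteMeasure μ] {A : Set Ω} (hA : MeasurableSet A) :
    MeasureTheory.Integrable (Set.indicator A fun _ => (1 : ℝ)) μ :=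
  (MeasureTheory.integrable_const (1 : ℝ)).indicator hA

private lemma aux_ind {Ω : Type*} {m0 : MeasurableSpace Ω} (μ : MeasureTheory.Measure Ω)
    [MeasureTheory.IsFiniteMeasure μ] {A : Set Ω} (hA : MeasurableSet A) (s : Set Ω) :
    ∫ x in s, Set.indicator A (fun _ => (1 : ℝ)) x ∂μ = (μ (A ∩ s)).toReal := by
  rw [MeasureTheory.setIntegral_indicator hA, MeasureTheory.setIntegral_const, Set.inter_comm]
  simp
  rfl

private lemma aux_cind {Ω : Type*} {m0 : MeasurableSpace Ω} (μ : MeasureTheory.Measure Ω)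
    [MeasureTheory.IsFiniteMeasure μ] {B : Set Ω} (hB : MeasurableSet B) (c : ℝ) (s : Set Ω) :
    ∫ x in s, c * Set.indicator B (fun _ => (1 : ℝ)) x ∂μ = c * (μ (s ∩ B)).toReal := by
  rw [MeasureTheory.integral_const_mul, MeasureTheory.setIntegral_indicator hB,
    MeasureTheory.setIntegral_const]
  simp [Measure.real_def]

private lemma aux_congr {Ω : Type*} {m0 : MeasurableSpace Ω} {μ : MeasureTheory.Measure Ω}
    {f g : Ω → ℝ} {s : Set Ω} (hs : MeasurableSet s) (h : f =ᵐ[μ] g) :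
    ∫ x in s, f x ∂μ = ∫ x in s, g x ∂μ :=
  MeasureTheory.setIntegral_congr_ae hs (h.mono fun _ hx _ => hx)

/-- **Equation (4), true-positive-rate identity.** Under SCAR, if `μ(B ∩ C) > 0`, then
for every classifier `G ∈ 𝒢`,
`μ(G | B ∩ C) = (∫_{G ∩ C} f dμ) / (c · μ(B ∩ C))`. -/
theorem tpr_identity {Ω : Type*} (𝒢 : MeasurableSpace Ω) {m0 : MeasurableSpace Ω} (μ : Measure Ω)
    [IsProbabilityMeasure μ] (h𝒢 : 𝒢 ≤ m0)
    (A B : Set Ω) (hA : MeasurableSet A) (hB : MeasurableSet B) (hAB : A ⊆ B)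
    (c : ℝ) (hc0 : 0 < c) (hc1 : c ≤ 1)
    (hSCAR : μ[Set.indicator A (fun _ => (1 : ℝ)) | 𝒢 ⊔ MeasurableSpace.generateFrom {B}]
      =ᵐ[μ] fun ω => c * Set.indicator B (fun _ => (1 : ℝ)) ω)
    (f : Ω → ℝ) (hf_meas : Measurable[𝒢] f)
    (hf_ver : f =ᵐ[μ] μ[Set.indicator A (fun _ => (1 : ℝ)) | 𝒢])
    (hf_bd : ∀ ω, 0 ≤ f ω ∧ f ω ≤ c)
    (C : Set Ω) (hC : MeasurableSet[𝒢] C)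
    (hBC : 0 < μ (B ∩ C))
    (G : Set Ω) (hG : MeasurableSet[𝒢] G) :
    (ProbabilityTheory.cond μ (B ∩ C) G).toReal
      = (∫ ω in G ∩ C, f ω ∂μ) / (c * (μ (B ∩ C)).toReal) := by
  classical
  have hA0 : MeasurableSet[m0] A := hA
  have hB0 : MeasurableSet[m0] B := hB
  have hgen : MeasurableSpace.generateFrom {B} ≤ m0 :=
    MeasurableSpace.generateFrom_le
      (fun s hs => by simp only [Set.mem_singleton_iff] at hs; subst hs; exact hB0)
  have hm2_le : 𝒢 ⊔ MeasurableSpace.generateFrom {B} ≤ m0 := sup_le h𝒢 hgen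
  have hInt : Integrable (Set.indicator A fun _ => (1:ℝ)) μ := aux_int μ hA0
  have hGC : MeasurableSet[𝒢] (G ∩ C) := hG.inter hC
  have hGC0 : MeasurableSet[m0] (G ∩ C) := h𝒢 _ hGC
  have hGCB : MeasurableSet[𝒢 ⊔ MeasurableSpace.generateFrom {B}] (G ∩ C ∩ B) :=
    ((le_sup_left : 𝒢 ≤ 𝒢 ⊔ MeasurableSpace.generateFrom {B}) _ hGC).inter
      ((le_sup_right : MeasurableSpace.generateFrom {B} ≤ 𝒢 ⊔ MeasurableSpace.generateFrom {B}) _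
        (MeasurableSpace.measurableSet_generateFrom rfl))
  have hGCB0 : MeasurableSet[m0] (G ∩ C ∩ B) := hm2_le _ hGCB
  have step1 : ∫ ω in G ∩ C, f ω ∂μ = (μ (A ∩ (G ∩ C))).toReal := by
    have h1 : ∫ ω in G ∩ C, f ω ∂μ
        = ∫ ω in G ∩ C, (μ[Set.indicator A (fun _ => (1:ℝ))|𝒢]) ω ∂μ :=
      aux_congr hGC0 hf_ver
    rw [h1, setIntegral_condExp h𝒢 hInt hGC]
    exact aux_ind μ hA0 _
  have hABC : A ∩ (G ∩ C ∩ B) = A ∩ (G ∩ C) := by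
    ext ω; constructor
    · rintro ⟨h1, h2, _⟩; exact ⟨h1, h2⟩
    · rintro ⟨h1, h2⟩; exact ⟨h1, h2, hAB h1⟩
  have step2 : (μ (A ∩ (G ∩ C))).toReal = c * (μ (G ∩ C ∩ B)).toReal := by
    have e1 : ∫ ω in G ∩ C ∩ B,
        (μ[Set.indicator A (fun _ => (1:ℝ))|𝒢 ⊔ MeasurableSpace.generateFrom {B}]) ω ∂μ
        = (μ (A ∩ (G ∩ C))).toReal := by
      rw [setIntegral_condExp hm2_le hInt hGCB, aux_ind μ hA0, hABC]
    have e2 : ∫ ω in G ∩ C ∩ B,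
        (μ[Set.indicator A (fun _ => (1:ℝ))|𝒢 ⊔ MeasurableSpace.generateFrom {B}]) ω ∂μ
        = c * (μ (G ∩ C ∩ B)).toReal := by
      rw [aux_congr hGCB0 hSCAR, aux_cind μ hB0,
        Set.inter_assoc, Set.inter_self]
    rw [← e1, e2]
  have hμfin : μ (B ∩ C) ≠ ⊤ := measure_ne_top μ _
  have hBCG : B ∩ C ∩ G = G ∩ C ∩ B := by
    ext ω; constructor
    · rintro ⟨⟨h1, h2⟩, h3⟩; exact ⟨⟨h3, h2⟩, h1⟩
    · rintro ⟨⟨h1, h2⟩, h3⟩; exact ⟨⟨h3, h2⟩, h1⟩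
  have hBC0 : MeasurableSet[m0] (B ∩ C) := hB0.inter (h𝒢 _ hC)
  rw [ProbabilityTheory.cond_apply hBC0 μ G, hBCG, step1, step2,
    ENNReal.toReal_mul, ENNReal.toReal_inv]
  have hne : (μ (B ∩ C)).toReal ≠ 0 := ENNReal.toReal_ne_zero.mpr ⟨hBC.ne', hμfin⟩
  field_simp
end

section
/- (Equation (4), true-negative-rate identity.) Under the SCAR assumption, if μ(Bᶜ ∩ C) > 0, then for every classifier G ∈ 𝒢 the conditional probability of predicting negative among negatives in group C satisfies μ(Gᶜ | Bᶜ ∩ C) = (∫_{Gᶜ ∩ C} (c − f) dμ) / (c · μ(Bᶜ ∩ C)). -/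
open MeasureTheory

theorem tnr_aux {Ω : Type*} (𝒢 : MeasurableSpace Ω) {m0 : MeasurableSpace Ω} (μ : Measure Ω)
    [IsProbabilityMeasure μ] (h𝒢 : 𝒢 ≤ m0)
    (A B : Set Ω) (hA : MeasurableSet A) (hB : MeasurableSet B) (hAB : A ⊆ B)
    (c : ℝ) (hc0 : 0 < c) (hc1 : c ≤ 1)
    (hSCAR : μ[Set.indicator A (fun _ => (1 : ℝ)) | 𝒢 ⊔ MeasurableSpace.generateFrom {B}]
      =ᵐ[μ] fun ω => c * Set.indicator B (fun _ => (1 : ℝ)) ω)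
    (f : Ω → ℝ) (hf_meas : Measurable[𝒢] f)
    (hf_ver : f =ᵐ[μ] μ[Set.indicator A (fun _ => (1 : ℝ)) | 𝒢])
    (hf_bd : ∀ ω, 0 ≤ f ω ∧ f ω ≤ c)
    (C : Set Ω) (hC : MeasurableSet[𝒢] C)
    (hBcC : 0 < μ (Bᶜ ∩ C))
    (G : Set Ω) (hG : MeasurableSet[𝒢] G) :
    (ProbabilityTheory.cond μ (Bᶜ ∩ C) Gᶜ).toReal
      = (∫ ω in Gᶜ ∩ C, (c - f ω) ∂μ) / (c * (μ (Bᶜ ∩ C)).toReal) := by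
  have hA0 : MeasurableSet A := hA
  have hB0 : MeasurableSet B := hB
  have hsup : 𝒢 ⊔ MeasurableSpace.generateFrom {B} ≤ m0 :=
    sup_le h𝒢 (MeasurableSpace.generateFrom_le (by rintro t rfl; exact hB0))
  have hInt : Integrable (Set.indicator A (fun _ => (1 : ℝ))) μ :=
    (integrable_const (1 : ℝ)).indicator hA0
  -- key identity: for 𝒢-measurable D, ∫_D f = c * μ(B ∩ D)
  have key : ∀ D : Set Ω, MeasurableSet[𝒢] D →
      ∫ ω in D, f ω ∂μ = c * (μ (B ∩ D)).toReal := by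
    intro D hD
    have hDm : MeasurableSet D := h𝒢 _ hD
    have h1 : ∫ ω in D, f ω ∂μ = ∫ ω in D, Set.indicator A (fun _ => (1 : ℝ)) ω ∂μ := by
      rw [setIntegral_congr_ae hDm (hf_ver.mono fun ω h _ => h)]
      exact setIntegral_condExp h𝒢 hInt hD
    have hIndInt : ∀ E : Set Ω, MeasurableSet E →
        ∫ ω in E, Set.indicator A (fun _ => (1 : ℝ)) ω ∂μ = (μ (A ∩ E)).toReal := by
      intro E hE
      rw [setIntegral_indicator hA0, setIntegral_const, smul_eq_mul, mul_one,
        Set.inter_comm, measureReal_def]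
    have hDB : MeasurableSet[𝒢 ⊔ MeasurableSpace.generateFrom {B}] (D ∩ B) :=
      MeasurableSet.inter ((le_sup_left : 𝒢 ≤ _) _ hD)
        ((le_sup_right : MeasurableSpace.generateFrom {B} ≤ _) _
          (MeasurableSpace.measurableSet_generateFrom rfl))
    have hDBm : MeasurableSet (D ∩ B) := hsup _ hDB
    have h2 : ∫ ω in D ∩ B, Set.indicator A (fun _ => (1 : ℝ)) ω ∂μ
        = ∫ ω in D ∩ B, c * Set.indicator B (fun _ => (1 : ℝ)) ω ∂μ := by
      rw [← setIntegral_condExp hsup hInt hDB]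
      exact setIntegral_congr_ae hDBm (hSCAR.mono fun ω h _ => h)
    have h3 : ∫ ω in D ∩ B, c * Set.indicator B (fun _ => (1 : ℝ)) ω ∂μ
        = c * (μ (B ∩ D)).toReal := by
      rw [integral_const_mul, setIntegral_indicator hB0, setIntegral_const, measureReal_def, smul_eq_mul,
        mul_one, Set.inter_assoc, Set.inter_self, Set.inter_comm]
    have hAD : A ∩ D = A ∩ (D ∩ B) := by
      ext ω; constructor
      · rintro ⟨h1, h2⟩; exact ⟨h1, h2, hAB h1⟩
      · rintro ⟨h1, h2, _⟩; exact ⟨h1, h2⟩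
    rw [h1, hIndInt D hDm, hAD, ← hIndInt (D ∩ B) hDBm, h2, h3]
  -- compute the numerator
  have hGcC : MeasurableSet[𝒢] (Gᶜ ∩ C) := hG.compl.inter hC
  have hGcCm : MeasurableSet (Gᶜ ∩ C) := h𝒢 _ hGcC
  have hfInt : Integrable f μ := by
    refine ⟨(hf_meas.mono h𝒢 le_rfl).aestronglyMeasurable, ?_⟩
    refine HasFiniteIntegral.of_bounded (C := c) (Filter.Eventually.of_forall fun ω => ?_)
    rw [Real.norm_eq_abs, abs_le]
    exact ⟨le_trans (by linarith) (hf_bd ω).1, (hf_bd ω).2⟩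
  have hnum : ∫ ω in Gᶜ ∩ C, (c - f ω) ∂μ = c * (μ (Bᶜ ∩ (Gᶜ ∩ C))).toReal := by
    rw [integral_sub (integrableOn_const (C := c) (measure_ne_top _ _)) hfInt.integrableOn,
      setIntegral_const, measureReal_def, smul_eq_mul, key (Gᶜ ∩ C) hGcC]
    have hsplit : μ (Gᶜ ∩ C) = μ (B ∩ (Gᶜ ∩ C)) + μ (Bᶜ ∩ (Gᶜ ∩ C)) := by
      rw [Set.inter_comm B, Set.inter_comm Bᶜ]
      exact (measure_inter_add_diff (Gᶜ ∩ C) hB0).symm.trans (by rw [Set.diff_eq])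
    rw [hsplit, ENNReal.toReal_add (measure_ne_top _ _) (measure_ne_top _ _)]
    ring
  -- compute the conditional probability
  have hBcCm : MeasurableSet (Bᶜ ∩ C) := (hB0.compl).inter (h𝒢 _ hC)
  rw [ProbabilityTheory.cond_apply hBcCm, hnum]
  have hE : Bᶜ ∩ C ∩ Gᶜ = Bᶜ ∩ (Gᶜ ∩ C) := by
    ext ω; constructor
    · rintro ⟨⟨h1, h2⟩, h3⟩; exact ⟨h1, h3, h2⟩
    · rintro ⟨h1, h3, h2⟩; exact ⟨⟨h1, h2⟩, h3⟩
  rw [hE, ENNReal.toReal_mul, ENNReal.toReal_inv]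
  have hμpos : (μ (Bᶜ ∩ C)).toReal ≠ 0 :=
    ne_of_gt (ENNReal.toReal_pos hBcC.ne' (measure_ne_top _ _))
  field_simp

/-- **Equation (4), true-negative-rate identity.** Under SCAR, if `μ(Bᶜ ∩ C) > 0`, then
for every classifier `G ∈ 𝒢`,
`μ(Gᶜ | Bᶜ ∩ C) = (∫_{Gᶜ ∩ C} (c − f) dμ) / (c · μ(Bᶜ ∩ C))`. -/
theorem tnr_identity {Ω : Type*} (𝒢 : MeasurableSpace Ω) {m0 : MeasurableSpace Ω} (μ : Measure Ω)
    [IsProbabilityMeasure μ] (h𝒢 : 𝒢 ≤ m0)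
    (A B : Set Ω) (hA : MeasurableSet A) (hB : MeasurableSet B) (hAB : A ⊆ B)
    (c : ℝ) (hc0 : 0 < c) (hc1 : c ≤ 1)
    (hSCAR : μ[Set.indicator A (fun _ => (1 : ℝ)) | 𝒢 ⊔ MeasurableSpace.generateFrom {B}]
      =ᵐ[μ] fun ω => c * Set.indicator B (fun _ => (1 : ℝ)) ω)
    (f : Ω → ℝ) (hf_meas : Measurable[𝒢] f)
    (hf_ver : f =ᵐ[μ] μ[Set.indicator A (fun _ => (1 : ℝ)) | 𝒢])
    (hf_bd : ∀ ω, 0 ≤ f ω ∧ f ω ≤ c)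
    (C : Set Ω) (hC : MeasurableSet[𝒢] C)
    (hBcC : 0 < μ (Bᶜ ∩ C))
    (G : Set Ω) (hG : MeasurableSet[𝒢] G) :
    (ProbabilityTheory.cond μ (Bᶜ ∩ C) Gᶜ).toReal
      = (∫ ω in Gᶜ ∩ C, (c - f ω) ∂μ) / (c * (μ (Bᶜ ∩ C)).toReal) :=
  tnr_aux 𝒢 μ h𝒢 A B hA hB hAB c hc0 hc1 hSCAR f hf_meas hf_ver hf_bd C hC hBcC G hG
end

section
/- (Risk decomposition in PU learning.) Under the SCAR assumption, for every classifier G ∈ 𝒢 the misclassification risk satisfies μ(G Δ B) = μ(B) + ∫_G (1 − 2·f/c) dμ. -/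
open MeasureTheory


open MeasureTheory in
private lemma aux_int_s3 {Ω : Type*} [m : MeasurableSpace Ω] (μ : Measure Ω)
    [IsFiniteMeasure μ] (c : ℝ) (hc0 : 0 ≤ c) (f : Ω → ℝ) (hf : Measurable f)
    (hbd : ∀ ω, 0 ≤ f ω ∧ f ω ≤ c) : Integrable f μ := by
  refine ⟨hf.aestronglyMeasurable, ?_⟩
  refine (hasFiniteIntegral_const c).mono ?_
  filter_upwards with ω
  rw [Real.norm_eq_abs, Real.norm_eq_abs, abs_of_nonneg (hbd ω).1, abs_of_nonneg hc0]
  exact (hbd ω).2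

open MeasureTheory in
private lemma aux_intA {Ω : Type*} [m : MeasurableSpace Ω] (μ : Measure Ω)
    [IsFiniteMeasure μ] (A : Set Ω) (hA : MeasurableSet A) :
    Integrable (Set.indicator A (fun _ => (1 : ℝ))) μ :=
  (integrable_const (1 : ℝ)).indicator hA

open MeasureTheory in
private lemma aux_e5 {Ω : Type*} [m : MeasurableSpace Ω] (μ : Measure Ω)
    [IsFiniteMeasure μ] (B G : Set Ω) (hB : MeasurableSet B) (c : ℝ) :
    ∫ ω in G, c * Set.indicator B (fun _ => (1 : ℝ)) ω ∂μ = c * (μ (G ∩ B)).toReal := by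
  rw [integral_const_mul, setIntegral_indicator hB]
  simp [Measure.real]

open MeasureTheory in
private lemma aux_hint2 {Ω : Type*} [m : MeasurableSpace Ω] (μ : Measure Ω)
    [IsFiniteMeasure μ] (B G : Set Ω) (c : ℝ) (hc0 : 0 < c) (f : Ω → ℝ)
    (hfint : Integrable f μ)
    (key : ∫ ω in G, f ω ∂μ = c * (μ (G ∩ B)).toReal) :
    ∫ ω in G, (1 - 2 * f ω / c) ∂μ = (μ G).toReal - 2 * (μ (G ∩ B)).toReal := by
  have hsplit : ∫ ω in G, (1 - 2 * f ω / c) ∂μ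
      = ∫ ω in G, (1 : ℝ) ∂μ - ∫ ω in G, 2 * f ω / c ∂μ := by
    refine integral_sub (integrable_const 1).integrableOn ?_
    exact ((hfint.const_mul 2).div_const c).integrableOn
  rw [hsplit]
  have h1 : ∫ ω in G, (1 : ℝ) ∂μ = (μ G).toReal := by simp [Measure.real]
  have h2 : ∫ ω in G, 2 * f ω / c ∂μ = 2 * (μ (G ∩ B)).toReal := by
    have hc : ∫ ω in G, 2 * f ω / c ∂μ = (2 / c) * ∫ ω in G, f ω ∂μ := by
      rw [← integral_const_mul]
      congr 1; ext ω; ring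
    rw [hc, key]
    field_simp
  rw [h1, h2]

/-- **Risk decomposition in PU learning.** Under SCAR, for every classifier `G ∈ 𝒢`,
`μ(G Δ B) = μ(B) + ∫_G (1 − 2·f/c) dμ`. -/
theorem risk_decomposition {Ω : Type*} (𝒢 : MeasurableSpace Ω) {m0 : MeasurableSpace Ω} (μ : Measure Ω)
    [IsProbabilityMeasure μ] (h𝒢 : 𝒢 ≤ m0)
    (A B : Set Ω) (hA : MeasurableSet A) (hB : MeasurableSet B) (hAB : A ⊆ B)
    (c : ℝ) (hc0 : 0 < c) (hc1 : c ≤ 1)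
    (hSCAR : μ[Set.indicator A (fun _ => (1 : ℝ)) | 𝒢 ⊔ MeasurableSpace.generateFrom {B}]
      =ᵐ[μ] fun ω => c * Set.indicator B (fun _ => (1 : ℝ)) ω)
    (f : Ω → ℝ) (hf_meas : Measurable[𝒢] f)
    (hf_ver : f =ᵐ[μ] μ[Set.indicator A (fun _ => (1 : ℝ)) | 𝒢])
    (hf_bd : ∀ ω, 0 ≤ f ω ∧ f ω ≤ c)
    (G : Set Ω) (hG : MeasurableSet[𝒢] G) :
    (μ (symmDiff G B)).toReal = (μ B).toReal + ∫ ω in G, (1 - 2 * f ω / c) ∂μ := by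
  have hGm : MeasurableSet[m0] G := h𝒢 G hG
  have hA' : MeasurableSet[m0] A := hA
  have hB' : MeasurableSet[m0] B := hB
  have hm' : 𝒢 ⊔ MeasurableSpace.generateFrom {B} ≤ m0 := by
    refine sup_le h𝒢 (MeasurableSpace.generateFrom_le ?_)
    rintro s hs
    simp only [Set.mem_singleton_iff] at hs
    subst hs; exact hB'
  have hG' : MeasurableSet[𝒢 ⊔ MeasurableSpace.generateFrom {B}] G :=
    (le_sup_left : 𝒢 ≤ _) G hG
  have hintA : Integrable (Set.indicator A (fun _ => (1 : ℝ))) μ :=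
    @aux_intA Ω m0 μ _ A hA'
  -- f is integrable
  have hfm : Measurable[m0] f := hf_meas.mono h𝒢 le_rfl
  have hfint : Integrable f μ := @aux_int_s3 Ω m0 μ _ c hc0.le f hfm hf_bd
  -- key: ∫_G f = c * μ(G ∩ B).toReal
  have key : ∫ ω in G, f ω ∂μ = c * (μ (G ∩ B)).toReal := by
    have e1 : ∫ ω in G, f ω ∂μ = ∫ ω in G, (μ[Set.indicator A (fun _ => (1 : ℝ)) | 𝒢]) ω ∂μ :=
      integral_congr_ae (ae_restrict_of_ae hf_ver)
    have e2 : ∫ ω in G, (μ[Set.indicator A (fun _ => (1 : ℝ)) | 𝒢]) ω ∂μ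
        = ∫ ω in G, Set.indicator A (fun _ => (1 : ℝ)) ω ∂μ :=
      setIntegral_condExp h𝒢 hintA hG
    have e3 : ∫ ω in G, Set.indicator A (fun _ => (1 : ℝ)) ω ∂μ
        = ∫ ω in G, (μ[Set.indicator A (fun _ => (1 : ℝ)) | 𝒢 ⊔ MeasurableSpace.generateFrom {B}]) ω ∂μ :=
      (setIntegral_condExp hm' hintA hG').symm
    have e4 : ∫ ω in G, (μ[Set.indicator A (fun _ => (1 : ℝ)) | 𝒢 ⊔ MeasurableSpace.generateFrom {B}]) ω ∂μ
        = ∫ ω in G, c * Set.indicator B (fun _ => (1 : ℝ)) ω ∂μ :=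
      integral_congr_ae (ae_restrict_of_ae hSCAR)
    have e5 : ∫ ω in G, c * Set.indicator B (fun _ => (1 : ℝ)) ω ∂μ
        = c * (μ (G ∩ B)).toReal := @aux_e5 Ω m0 μ _ B G hB' c
    rw [e1, e2, e3, e4, e5]
  -- compute the integral of 1 - 2 f / c
  have hint2 : ∫ ω in G, (1 - 2 * f ω / c) ∂μ
      = (μ G).toReal - 2 * (μ (G ∩ B)).toReal :=
    @aux_hint2 Ω m0 μ _ B G c hc0 f hfint key
  -- measure arithmetic
  have hsd : μ (symmDiff G B) = μ (G \ B) + μ (B \ G) := by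
    rw [Set.symmDiff_def, measure_union disjoint_sdiff_sdiff (hB'.diff hGm)]
  have hGsplit : μ (G ∩ B) + μ (G \ B) = μ G := measure_inter_add_diff G hB'
  have hBsplit : μ (B ∩ G) + μ (B \ G) = μ B := measure_inter_add_diff B hGm
  have hBG : μ (B ∩ G) = μ (G ∩ B) := by rw [Set.inter_comm]
  have t1 : (μ (G ∩ B)).toReal + (μ (G \ B)).toReal = (μ G).toReal := by
    rw [← ENNReal.toReal_add (measure_ne_top μ _) (measure_ne_top μ _), hGsplit]
  have t2 : (μ (G ∩ B)).toReal + (μ (B \ G)).toReal = (μ B).toReal := by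
    rw [← ENNReal.toReal_add (measure_ne_top μ _) (measure_ne_top μ _), ← hBG, hBsplit]
  have t3 : (μ (symmDiff G B)).toReal = (μ (G \ B)).toReal + (μ (B \ G)).toReal := by
    rw [hsd, ENNReal.toReal_add (measure_ne_top μ _) (measure_ne_top μ _)]
  rw [t3, hint2]
  linarith
end

section
/- (Equations (5) imply Equalized Odds.) Under the SCAR assumption and the positivity assumption, if a classifier G ∈ 𝒢 satisfies (∫_{G ∩ C} f dμ) / μ(B ∩ C) = (∫_{G ∩ Cᶜ} f dμ) / μ(B ∩ Cᶜ) and (∫_{Gᶜ ∩ C} (c − f) dμ) / μ(Bᶜ ∩ C) = (∫_{Gᶜ ∩ Cᶜ} (c − f) dμ) / μ(Bᶜ ∩ Cᶜ), then G satisfies Equalized Odds, i.e. μ(G | B ∩ C) = μ(G | B ∩ Cᶜ) and μ(G | Bᶜ ∩ C) = μ(G | Bᶜ ∩ Cᶜ). -/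
open MeasureTheory

private theorem equations_imply_equalized_odds_aux {Ω : Type*} (𝒢 : MeasurableSpace Ω)
    {m0 : MeasurableSpace Ω} (μ : Measure Ω)
    [IsProbabilityMeasure μ] (h𝒢 : 𝒢 ≤ m0)
    (A B : Set Ω) (hA : MeasurableSet[m0] A) (hB : MeasurableSet[m0] B) (hAB : A ⊆ B)
    (c : ℝ) (hc0 : 0 < c) (hc1 : c ≤ 1)
    (hSCAR : μ[Set.indicator A (fun _ => (1 : ℝ)) | 𝒢 ⊔ MeasurableSpace.generateFrom {B}]
      =ᵐ[μ] fun ω => c * Set.indicator B (fun _ => (1 : ℝ)) ω)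
    (f : Ω → ℝ) (hf_meas : Measurable[𝒢] f)
    (hf_ver : f =ᵐ[μ] μ[Set.indicator A (fun _ => (1 : ℝ)) | 𝒢])
    (hf_bd : ∀ ω, 0 ≤ f ω ∧ f ω ≤ c)
    (C : Set Ω) (hC : MeasurableSet[𝒢] C)
    (hBC : 0 < μ (B ∩ C)) (hBCc : 0 < μ (B ∩ Cᶜ))
    (hBcC : 0 < μ (Bᶜ ∩ C)) (hBcCc : 0 < μ (Bᶜ ∩ Cᶜ))
    (G : Set Ω) (hG : MeasurableSet[𝒢] G)
    (heq1 : (∫ ω in G ∩ C, f ω ∂μ) / (μ (B ∩ C)).toReal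
      = (∫ ω in G ∩ Cᶜ, f ω ∂μ) / (μ (B ∩ Cᶜ)).toReal)
    (heq2 : (∫ ω in Gᶜ ∩ C, (c - f ω) ∂μ) / (μ (Bᶜ ∩ C)).toReal
      = (∫ ω in Gᶜ ∩ Cᶜ, (c - f ω) ∂μ) / (μ (Bᶜ ∩ Cᶜ)).toReal) :
    ProbabilityTheory.cond μ (B ∩ C) G = ProbabilityTheory.cond μ (B ∩ Cᶜ) G
      ∧ ProbabilityTheory.cond μ (Bᶜ ∩ C) G = ProbabilityTheory.cond μ (Bᶜ ∩ Cᶜ) G := by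
  have hAm0 : MeasurableSet[m0] A := hA
  have hBm0 : MeasurableSet[m0] B := hB
  have hGm0 : MeasurableSet[m0] G := h𝒢 _ hG
  have hCm0 : MeasurableSet[m0] C := h𝒢 _ hC
  have hm' : 𝒢 ⊔ MeasurableSpace.generateFrom {B} ≤ m0 := by
    refine sup_le h𝒢 (MeasurableSpace.generateFrom_le ?_)
    rintro s rfl
    exact hBm0
  have hBm' : MeasurableSet[𝒢 ⊔ MeasurableSpace.generateFrom {B}] B :=
    (le_sup_right : MeasurableSpace.generateFrom {B} ≤ _) B
      (MeasurableSpace.measurableSet_generateFrom rfl)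
  have hind : Integrable (Set.indicator A (fun _ => (1 : ℝ))) μ :=
    (integrable_const (μ := μ) (1 : ℝ)).indicator hAm0
  have hfint : Integrable f μ := integrable_condExp.congr hf_ver.symm
  -- indicator integral
  have hindint : ∀ (E : Set Ω), MeasurableSet[m0] E →
      ∫ ω in E, Set.indicator A (fun _ => (1 : ℝ)) ω ∂μ = (μ (A ∩ E)).toReal := by
    intro E hE
    rw [integral_indicator_const (μ := μ.restrict E) (1 : ℝ) hAm0, measureReal_def, Measure.restrict_apply hAm0]
    simp
  -- SCAR consequence: for D ∈ 𝒢, μ(A ∩ D) = c * μ(B ∩ D)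
  have hSCARc : ∀ (D : Set Ω), MeasurableSet[𝒢] D →
      (μ (A ∩ D)).toReal = c * (μ (B ∩ D)).toReal := by
    intro D hD
    have hDm0 : MeasurableSet[m0] D := h𝒢 _ hD
    have hE : MeasurableSet[𝒢 ⊔ MeasurableSpace.generateFrom {B}] (D ∩ B) :=
      MeasurableSet.inter ((le_sup_left : 𝒢 ≤ _) D hD) hBm'
    have h1 : ∫ ω in D ∩ B, Set.indicator A (fun _ => (1 : ℝ)) ω ∂μ
        = ∫ ω in D ∩ B,
          (μ[Set.indicator A (fun _ => (1 : ℝ)) | 𝒢 ⊔ MeasurableSpace.generateFrom {B}]) ω ∂μ :=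
      (setIntegral_condExp hm' hind hE).symm
    have h2 : ∫ ω in D ∩ B,
          (μ[Set.indicator A (fun _ => (1 : ℝ)) | 𝒢 ⊔ MeasurableSpace.generateFrom {B}]) ω ∂μ
        = ∫ ω in D ∩ B, c * Set.indicator B (fun _ => (1 : ℝ)) ω ∂μ :=
      integral_congr_ae (ae_restrict_of_ae hSCAR)
    have h3 : ∫ ω in D ∩ B, c * Set.indicator B (fun _ => (1 : ℝ)) ω ∂μ
        = c * (μ (B ∩ (D ∩ B))).toReal := by
      rw [integral_const_mul, integral_indicator_const (μ := μ.restrict (D ∩ B)) (1 : ℝ) hBm0, measureReal_def, Measure.restrict_apply hBm0]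
      simp
    have hADB : A ∩ D = A ∩ (D ∩ B) := by
      ext x
      exact ⟨fun ⟨hx, hy⟩ => ⟨hx, hy, hAB hx⟩, fun ⟨hx, hy, _⟩ => ⟨hx, hy⟩⟩
    have hBDB : B ∩ (D ∩ B) = B ∩ D := by
      ext x
      exact ⟨fun ⟨hx, hy, _⟩ => ⟨hx, hy⟩, fun ⟨hx, hy⟩ => ⟨hx, hy, hx⟩⟩
    have h4 := hindint (D ∩ B) (MeasurableSet.inter hDm0 hBm0)
    rw [h1, h2, h3, hBDB] at h4
    rw [hADB, h4]
  -- integral of f over D ∈ 𝒢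
  have key : ∀ (D : Set Ω), MeasurableSet[𝒢] D →
      ∫ ω in D, f ω ∂μ = c * (μ (B ∩ D)).toReal := by
    intro D hD
    have hDm0 : MeasurableSet[m0] D := h𝒢 _ hD
    have h1 : ∫ ω in D, f ω ∂μ
        = ∫ ω in D, (μ[Set.indicator A (fun _ => (1 : ℝ)) | 𝒢]) ω ∂μ :=
      integral_congr_ae (ae_restrict_of_ae hf_ver)
    rw [h1, setIntegral_condExp h𝒢 hind hD, hindint D hDm0, hSCARc D hD]
  -- split of measure
  have hsplit : ∀ (D : Set Ω), MeasurableSet[m0] D →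
      (μ D).toReal = (μ (B ∩ D)).toReal + (μ (Bᶜ ∩ D)).toReal := by
    intro D hD
    have h := measure_inter_add_diff (μ := μ) D hBm0
    rw [Set.diff_eq, Set.inter_comm D B, Set.inter_comm D Bᶜ] at h
    rw [← h, ENNReal.toReal_add (measure_ne_top μ _) (measure_ne_top μ _)]
  have key2 : ∀ (D : Set Ω), MeasurableSet[𝒢] D →
      ∫ ω in D, (c - f ω) ∂μ = c * (μ (Bᶜ ∩ D)).toReal := by
    intro D hD
    have hDm0 : MeasurableSet[m0] D := h𝒢 _ hD
    rw [integral_sub (integrable_const (μ := μ.restrict D) c) (hfint.restrict), setIntegral_const,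
      key D hD]
    rw [measureReal_def, hsplit D hDm0]
    simp only [smul_eq_mul]
    ring
  -- rewrite heq1
  rw [key (G ∩ C) (MeasurableSet.inter hG hC),
    key (G ∩ Cᶜ) (MeasurableSet.inter hG (MeasurableSet.compl hC))] at heq1
  rw [key2 (Gᶜ ∩ C) (MeasurableSet.inter (MeasurableSet.compl hG) hC),
    key2 (Gᶜ ∩ Cᶜ)
      (MeasurableSet.inter (MeasurableSet.compl hG) (MeasurableSet.compl hC))] at heq2
  have hne : ∀ (s : Set Ω), 0 < μ s → (μ s).toReal ≠ 0 := fun s hs =>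
    ENNReal.toReal_ne_zero.mpr ⟨hs.ne', measure_ne_top μ s⟩
  have hne1 := hne _ hBC; have hne2 := hne _ hBCc
  have hne3 := hne _ hBcC; have hne4 := hne _ hBcCc
  -- reduce heq1 to ratio equality
  have hr1 : (μ (B ∩ (G ∩ C))).toReal / (μ (B ∩ C)).toReal
      = (μ (B ∩ (G ∩ Cᶜ))).toReal / (μ (B ∩ Cᶜ)).toReal := by
    rw [div_eq_div_iff hne1 hne2] at heq1 ⊢
    rw [mul_assoc, mul_assoc] at heq1
    exact mul_left_cancel₀ hc0.ne' heq1
  have hr2 : (μ (Bᶜ ∩ (Gᶜ ∩ C))).toReal / (μ (Bᶜ ∩ C)).toReal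
      = (μ (Bᶜ ∩ (Gᶜ ∩ Cᶜ))).toReal / (μ (Bᶜ ∩ Cᶜ)).toReal := by
    rw [div_eq_div_iff hne3 hne4] at heq2 ⊢
    rw [mul_assoc, mul_assoc] at heq2
    exact mul_left_cancel₀ hc0.ne' heq2
  -- from hr2 derive equality for G instead of Gᶜ
  have hsplitG : ∀ (D : Set Ω), MeasurableSet[m0] D →
      (μ D).toReal = (μ (D ∩ G)).toReal + (μ (D ∩ Gᶜ)).toReal := by
    intro D hD
    have h := measure_inter_add_diff (μ := μ) D hGm0
    rw [Set.diff_eq] at h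
    rw [← h, ENNReal.toReal_add (measure_ne_top μ _) (measure_ne_top μ _)]
  have hconv : ∀ (t : Set Ω), MeasurableSet[m0] t → (μ t).toReal ≠ 0 →
      ( (μ (t ∩ G)).toReal / (μ t).toReal = 1 - (μ (t ∩ Gᶜ)).toReal / (μ t).toReal ) := by
    intro t ht h0
    have hh := hsplitG t ht
    field_simp
    linarith
  -- cond equality from toReal ratio equality
  have condeq : ∀ (s t : Set Ω), MeasurableSet[m0] s → MeasurableSet[m0] t →
      0 < μ s → 0 < μ t →
      (μ (s ∩ G)).toReal / (μ s).toReal = (μ (t ∩ G)).toReal / (μ t).toReal →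
      ProbabilityTheory.cond μ s G = ProbabilityTheory.cond μ t G := by
    intro s t hs ht h0s h0t h
    rw [ProbabilityTheory.cond_apply hs μ G, ProbabilityTheory.cond_apply ht μ G]
    have h1 : ((μ s)⁻¹ * μ (s ∩ G)) ≠ ⊤ :=
      ENNReal.mul_ne_top (by simp [h0s.ne']) (measure_ne_top μ _)
    have h2 : ((μ t)⁻¹ * μ (t ∩ G)) ≠ ⊤ :=
      ENNReal.mul_ne_top (by simp [h0t.ne']) (measure_ne_top μ _)
    rw [← ENNReal.toReal_eq_toReal_iff' h1 h2, ENNReal.toReal_mul, ENNReal.toReal_mul,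
      ENNReal.toReal_inv, ENNReal.toReal_inv, inv_mul_eq_div, inv_mul_eq_div]
    exact h
  constructor
  · refine condeq _ _ (MeasurableSet.inter hBm0 hCm0)
      (MeasurableSet.inter hBm0 (MeasurableSet.compl hCm0)) hBC hBCc ?_
    have e1 : B ∩ C ∩ G = B ∩ (G ∩ C) := by
      rw [Set.inter_assoc, Set.inter_comm C G]
    have e2 : B ∩ Cᶜ ∩ G = B ∩ (G ∩ Cᶜ) := by
      rw [Set.inter_assoc, Set.inter_comm Cᶜ G]
    rw [e1, e2]; exact hr1
  · refine condeq _ _ (MeasurableSet.inter (MeasurableSet.compl hBm0) hCm0)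
      (MeasurableSet.inter (MeasurableSet.compl hBm0) (MeasurableSet.compl hCm0)) hBcC hBcCc ?_
    have e1 : Bᶜ ∩ C ∩ Gᶜ = Bᶜ ∩ (Gᶜ ∩ C) := by
      rw [Set.inter_assoc, Set.inter_comm C Gᶜ]
    have e2 : Bᶜ ∩ Cᶜ ∩ Gᶜ = Bᶜ ∩ (Gᶜ ∩ Cᶜ) := by
      rw [Set.inter_assoc, Set.inter_comm Cᶜ Gᶜ]
    rw [hconv _ (MeasurableSet.inter (MeasurableSet.compl hBm0) hCm0) hne3,
      hconv _ (MeasurableSet.inter (MeasurableSet.compl hBm0) (MeasurableSet.compl hCm0)) hne4,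
      e1, e2, hr2]

/-- **Equations (5) imply Equalized Odds.** Under SCAR and positivity, if a classifier
`G ∈ 𝒢` satisfies both equations of (5), then it satisfies Equalized Odds. -/
theorem equations_imply_equalized_odds {Ω : Type*} (𝒢 : MeasurableSpace Ω) {m0 : MeasurableSpace Ω} (μ : Measure Ω)
    [IsProbabilityMeasure μ] (h𝒢 : 𝒢 ≤ m0)
    (A B : Set Ω) (hA : MeasurableSet A) (hB : MeasurableSet B) (hAB : A ⊆ B)
    (c : ℝ) (hc0 : 0 < c) (hc1 : c ≤ 1)
    (hSCAR : μ[Set.indicator A (fun _ => (1 : ℝ)) | 𝒢 ⊔ MeasurableSpace.generateFrom {B}]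
      =ᵐ[μ] fun ω => c * Set.indicator B (fun _ => (1 : ℝ)) ω)
    (f : Ω → ℝ) (hf_meas : Measurable[𝒢] f)
    (hf_ver : f =ᵐ[μ] μ[Set.indicator A (fun _ => (1 : ℝ)) | 𝒢])
    (hf_bd : ∀ ω, 0 ≤ f ω ∧ f ω ≤ c)
    (C : Set Ω) (hC : MeasurableSet[𝒢] C)
    (hBC : 0 < μ (B ∩ C)) (hBCc : 0 < μ (B ∩ Cᶜ))
    (hBcC : 0 < μ (Bᶜ ∩ C)) (hBcCc : 0 < μ (Bᶜ ∩ Cᶜ))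
    (G : Set Ω) (hG : MeasurableSet[𝒢] G)
    (heq1 : (∫ ω in G ∩ C, f ω ∂μ) / (μ (B ∩ C)).toReal
      = (∫ ω in G ∩ Cᶜ, f ω ∂μ) / (μ (B ∩ Cᶜ)).toReal)
    (heq2 : (∫ ω in Gᶜ ∩ C, (c - f ω) ∂μ) / (μ (Bᶜ ∩ C)).toReal
      = (∫ ω in Gᶜ ∩ Cᶜ, (c - f ω) ∂μ) / (μ (Bᶜ ∩ Cᶜ)).toReal) :
    ProbabilityTheory.cond μ (B ∩ C) G = ProbabilityTheory.cond μ (B ∩ Cᶜ) G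
      ∧ ProbabilityTheory.cond μ (Bᶜ ∩ C) G = ProbabilityTheory.cond μ (Bᶜ ∩ Cᶜ) G :=
  equations_imply_equalized_odds_aux 𝒢 μ h𝒢 A B hA hB hAB c hc0 hc1 hSCAR f hf_meas hf_ver
    hf_bd C hC hBC hBCc hBcC hBcCc G hG heq1 heq2
end

section
/- (First equation of (5) implies Equal Opportunity.) Under the SCAR assumption, if μ(B ∩ C) > 0 and μ(B ∩ Cᶜ) > 0, and a classifier G ∈ 𝒢 satisfies (∫_{G ∩ C} f dμ) / μ(B ∩ C) = (∫_{G ∩ Cᶜ} f dμ) / μ(B ∩ Cᶜ), then G satisfies Equal Opportunity, i.e. μ(G | B ∩ C) = μ(G | B ∩ Cᶜ). -/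
open MeasureTheory

/-- **First equation of (5) implies Equal Opportunity.** Under SCAR, if `μ(B ∩ C) > 0`
and `μ(B ∩ Cᶜ) > 0`, and `G ∈ 𝒢` satisfies the first equation of (5), then `G` satisfies
Equal Opportunity: `μ(G | B ∩ C) = μ(G | B ∩ Cᶜ)`. -/
theorem equation_implies_equal_opportunity {Ω : Type*} (𝒢 : MeasurableSpace Ω) {m0 : MeasurableSpace Ω} (μ : Measure Ω)
    [IsProbabilityMeasure μ] (h𝒢 : 𝒢 ≤ m0)
    (A B : Set Ω) (hA : MeasurableSet A) (hB : MeasurableSet B) (hAB : A ⊆ B)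
    (c : ℝ) (hc0 : 0 < c) (hc1 : c ≤ 1)
    (hSCAR : μ[Set.indicator A (fun _ => (1 : ℝ)) | 𝒢 ⊔ MeasurableSpace.generateFrom {B}]
      =ᵐ[μ] fun ω => c * Set.indicator B (fun _ => (1 : ℝ)) ω)
    (f : Ω → ℝ) (hf_meas : Measurable[𝒢] f)
    (hf_ver : f =ᵐ[μ] μ[Set.indicator A (fun _ => (1 : ℝ)) | 𝒢])
    (hf_bd : ∀ ω, 0 ≤ f ω ∧ f ω ≤ c)
    (C : Set Ω) (hC : MeasurableSet[𝒢] C)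
    (hBC : 0 < μ (B ∩ C)) (hBCc : 0 < μ (B ∩ Cᶜ))
    (G : Set Ω) (hG : MeasurableSet[𝒢] G)
    (heq1 : (∫ ω in G ∩ C, f ω ∂μ) / (μ (B ∩ C)).toReal
      = (∫ ω in G ∩ Cᶜ, f ω ∂μ) / (μ (B ∩ Cᶜ)).toReal) :
    ProbabilityTheory.cond μ (B ∩ C) G = ProbabilityTheory.cond μ (B ∩ Cᶜ) G := by
  have hm : 𝒢 ⊔ MeasurableSpace.generateFrom {B} ≤ m0 :=
    sup_le h𝒢 (MeasurableSpace.generateFrom_le (by intro t ht; rw [Set.mem_singleton_iff] at ht; simpa [ht] using hB))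
  have hint : Integrable (Set.indicator A (fun _ => (1 : ℝ))) μ :=
    (integrable_const (1 : ℝ)).indicator hA
  -- key lemma
  have key : ∀ D : Set Ω, MeasurableSet[𝒢] D →
      ∫ ω in D, f ω ∂μ = c * (μ (D ∩ B)).toReal := by
    intro D hD
    have hD' : MeasurableSet[𝒢 ⊔ MeasurableSpace.generateFrom {B}] D :=
      (le_sup_left : 𝒢 ≤ 𝒢 ⊔ MeasurableSpace.generateFrom {B}) D hD
    calc ∫ ω in D, f ω ∂μ
        = ∫ ω in D, (μ[Set.indicator A (fun _ => (1 : ℝ)) | 𝒢]) ω ∂μ :=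
          integral_congr_ae (ae_restrict_of_ae hf_ver)
      _ = ∫ ω in D, Set.indicator A (fun _ => (1 : ℝ)) ω ∂μ :=
          setIntegral_condExp h𝒢 hint hD
      _ = ∫ ω in D, (μ[Set.indicator A (fun _ => (1 : ℝ)) | 𝒢 ⊔ MeasurableSpace.generateFrom {B}]) ω ∂μ :=
          (setIntegral_condExp hm hint hD').symm
      _ = ∫ ω in D, c * Set.indicator B (fun _ => (1 : ℝ)) ω ∂μ :=
          integral_congr_ae (ae_restrict_of_ae hSCAR)
      _ = c * ∫ ω in D, Set.indicator B (fun _ => (1 : ℝ)) ω ∂μ := integral_const_mul c _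
      _ = c * (μ (D ∩ B)).toReal := by
          rw [setIntegral_indicator (mX := m0) hB, setIntegral_const (mX := m0) (1 : ℝ)]
          simp [Measure.real]
  have k1 := key (G ∩ C) (hG.inter hC)
  have k2 := key (G ∩ Cᶜ) (hG.inter hC.compl)
  have e1 : (G ∩ C) ∩ B = (B ∩ C) ∩ G := by ext x; simp only [Set.mem_inter_iff]; tauto
  have e2 : (G ∩ Cᶜ) ∩ B = (B ∩ Cᶜ) ∩ G := by ext x; simp only [Set.mem_inter_iff]; tauto
  rw [k1, k2, e1, e2] at heq1
  have ha : (0:ℝ) < (μ (B ∩ C)).toReal := ENNReal.toReal_pos hBC.ne' (measure_ne_top μ _)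
  have hb : (0:ℝ) < (μ (B ∩ Cᶜ)).toReal := ENNReal.toReal_pos hBCc.ne' (measure_ne_top μ _)
  rw [ProbabilityTheory.cond_apply (hB.inter (h𝒢 _ hC)) μ G,
    ProbabilityTheory.cond_apply (hB.inter (h𝒢 _ hC).compl) μ G]
  rw [← ENNReal.toReal_eq_toReal_iff' (by finiteness) (by finiteness)]
  rw [ENNReal.toReal_mul, ENNReal.toReal_mul, ENNReal.toReal_inv, ENNReal.toReal_inv]
  have heq1' : ((μ ((B ∩ C) ∩ G)).toReal) / (μ (B ∩ C)).toReal
      = ((μ ((B ∩ Cᶜ) ∩ G)).toReal) / (μ (B ∩ Cᶜ)).toReal := by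
    field_simp at heq1 ⊢
    nlinarith [heq1]
  rw [inv_mul_eq_div, inv_mul_eq_div]
  exact heq1'
end

section
/- (Bayes-optimal classifier from PU data: λ = (0,0) case of Lemma 2.) Under the SCAR assumption, the classifier G₀ := {ω : f(ω) ≥ c/2} (which lies in 𝒢) minimizes the misclassification risk among all classifiers: for every G ∈ 𝒢, μ(G₀ Δ B) ≤ μ(G Δ B). -/
open MeasureTheory

/-- **Bayes-optimal classifier from PU data (`λ = (0,0)` case of Lemma 2).** Under SCAR,
the classifier `G₀ := {ω : f ω ≥ c/2}` minimizes the misclassification risk among all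
classifiers in `𝒢`. -/
theorem bayes_optimal_from_pu {Ω : Type*} (𝒢 : MeasurableSpace Ω) {m0 : MeasurableSpace Ω} (μ : Measure Ω)
    [IsProbabilityMeasure μ] (h𝒢 : 𝒢 ≤ m0)
    (A B : Set Ω) (hA : MeasurableSet A) (hB : MeasurableSet B) (hAB : A ⊆ B)
    (c : ℝ) (hc0 : 0 < c) (hc1 : c ≤ 1)
    (hSCAR : μ[Set.indicator A (fun _ => (1 : ℝ)) | 𝒢 ⊔ MeasurableSpace.generateFrom {B}]
      =ᵐ[μ] fun ω => c * Set.indicator B (fun _ => (1 : ℝ)) ω)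
    (f : Ω → ℝ) (hf_meas : Measurable[𝒢] f)
    (hf_ver : f =ᵐ[μ] μ[Set.indicator A (fun _ => (1 : ℝ)) | 𝒢])
    (hf_bd : ∀ ω, 0 ≤ f ω ∧ f ω ≤ c) :
    ∀ G : Set Ω, MeasurableSet[𝒢] G →
      μ (symmDiff {ω | c / 2 ≤ f ω} B) ≤ μ (symmDiff G B) := by
  intro G hG
  letI : MeasurableSpace Ω := m0
  -- basic measurability (m0-level)
  have hAm : MeasurableSet[m0] A := hA
  have hBm : MeasurableSet[m0] B := hB
  have hgen : MeasurableSpace.generateFrom {B} ≤ m0 := by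
    refine MeasurableSpace.generateFrom_le ?_
    rintro s hs
    simp only [Set.mem_singleton_iff] at hs
    subst hs; exact hBm
  have hsup : 𝒢 ⊔ MeasurableSpace.generateFrom {B} ≤ m0 := sup_le h𝒢 hgen
  have hG0' : MeasurableSet[𝒢] {ω | c / 2 ≤ f ω} := measurableSet_le measurable_const hf_meas
  have hG0 : MeasurableSet[m0] {ω | c / 2 ≤ f ω} := h𝒢 _ hG0'
  have hGm : MeasurableSet[m0] G := h𝒢 _ hG
  have hf_m0 : Measurable[m0] f := hf_meas.mono h𝒢 le_rfl
  -- integrability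
  have hIA : Integrable (Set.indicator A (fun _ => (1 : ℝ))) μ :=
    (integrable_const (1 : ℝ)).indicator hAm
  have hf_int : Integrable f μ := (integrable_condExp).congr hf_ver.symm
  -- key: for 𝒢-measurable K, ∫ x in K, f = c * μ(K ∩ B).toReal
  have key : ∀ K : Set Ω, MeasurableSet[𝒢] K →
      ∫ x in K, f x ∂μ = c * (μ (K ∩ B)).toReal := by
    intro K hK
    have hKsup : MeasurableSet[𝒢 ⊔ MeasurableSpace.generateFrom {B}] K :=
      (le_sup_left : 𝒢 ≤ _) _ hK
    calc ∫ x in K, f x ∂μ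
        = ∫ x in K, (μ[Set.indicator A (fun _ => (1 : ℝ)) | 𝒢]) x ∂μ :=
          integral_congr_ae (ae_restrict_of_ae hf_ver)
      _ = ∫ x in K, Set.indicator A (fun _ => (1 : ℝ)) x ∂μ :=
          setIntegral_condExp h𝒢 hIA hK
      _ = ∫ x in K, (μ[Set.indicator A (fun _ => (1 : ℝ)) |
            𝒢 ⊔ MeasurableSpace.generateFrom {B}]) x ∂μ :=
          (setIntegral_condExp hsup hIA hKsup).symm
      _ = ∫ x in K, c * Set.indicator B (fun _ => (1 : ℝ)) x ∂μ :=
          integral_congr_ae (ae_restrict_of_ae hSCAR)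
      _ = c * ∫ x in K, Set.indicator B (fun _ => (1 : ℝ)) x ∂μ := integral_const_mul _ _
      _ = c * (μ (K ∩ B)).toReal := by
          rw [setIntegral_indicator hBm, setIntegral_const, smul_eq_mul, mul_one, measureReal_def]
  -- risk formula
  have risk : ∀ K : Set Ω, MeasurableSet[𝒢] K →
      (μ (symmDiff K B)).toReal
        = (μ B).toReal + ∫ x in K, (1 - (2 / c) * f x) ∂μ := by
    intro K hK
    have hKm : MeasurableSet[m0] K := h𝒢 _ hK
    have h1 : μ (K ∩ B) + μ (K \ B) = μ K := measure_inter_add_diff K hBm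
    have h2 : μ (K ∩ B) + μ (B \ K) = μ B := by
      rw [Set.inter_comm]; exact measure_inter_add_diff B hKm
    have hdisj : Disjoint (K \ B) (B \ K) := disjoint_sdiff_sdiff
    have hsymm : μ (symmDiff K B) = μ (K \ B) + μ (B \ K) := by
      rw [Set.symmDiff_def, measure_union hdisj (hBm.diff hKm)]
    have hne : ∀ s : Set Ω, μ s ≠ ⊤ := fun s => measure_ne_top μ s
    have hint : ∫ x in K, (1 - (2 / c) * f x) ∂μ
        = (μ K).toReal - (2 / c) * ∫ x in K, f x ∂μ := by
      rw [integral_sub (integrable_const _).integrableOn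
        ((hf_int.const_mul _).integrableOn), setIntegral_const, integral_const_mul]
      simp [measureReal_def]
    have hKint : (μ (K ∩ B)).toReal + (μ (K \ B)).toReal = (μ K).toReal := by
      rw [← ENNReal.toReal_add (hne _) (hne _), h1]
    have hBint : (μ (K ∩ B)).toReal + (μ (B \ K)).toReal = (μ B).toReal := by
      rw [← ENNReal.toReal_add (hne _) (hne _), h2]
    have hsymm' : (μ (symmDiff K B)).toReal = (μ (K \ B)).toReal + (μ (B \ K)).toReal := by
      rw [hsymm, ENNReal.toReal_add (hne _) (hne _)]
    have h5 : (2 / c) * (c * (μ (K ∩ B)).toReal) = 2 * (μ (K ∩ B)).toReal := by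
      field_simp
    rw [hsymm', hint, key K hK]
    linarith [h5]
  -- compare integrals
  set g : Ω → ℝ := fun x => 1 - (2 / c) * f x with hg
  have hg_int : Integrable g μ := (integrable_const _).sub (hf_int.const_mul _)
  set G₀ : Set Ω := {ω | c / 2 ≤ f ω} with hG0def
  have hle : ∫ x in G₀, g x ∂μ ≤ ∫ x in G, g x ∂μ := by
    have e1 : ∫ x in G₀, g x ∂μ = ∫ x in G₀ ∩ G, g x ∂μ + ∫ x in G₀ \ G, g x ∂μ :=
      (integral_inter_add_diff hGm hg_int.integrableOn).symm
    have e2 : ∫ x in G, g x ∂μ = ∫ x in G ∩ G₀, g x ∂μ + ∫ x in G \ G₀, g x ∂μ :=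
      (integral_inter_add_diff hG0 hg_int.integrableOn).symm
    have h3 : ∫ x in G₀ \ G, g x ∂μ ≤ 0 := by
      refine setIntegral_nonpos (hG0.diff hGm) ?_
      intro x hx
      have hx1 : c / 2 ≤ f x := hx.1
      have hc' : (1 : ℝ) ≤ (2 / c) * f x := by
        rw [div_mul_eq_mul_div, le_div_iff₀ hc0]
        linarith
      simp only [hg]
      linarith
    have h4 : 0 ≤ ∫ x in G \ G₀, g x ∂μ := by
      refine setIntegral_nonneg (hGm.diff hG0) ?_
      intro x hx
      have hx1 : ¬ (c / 2 ≤ f x) := hx.2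
      have hfx : f x < c / 2 := not_le.mp hx1
      have hc' : (2 / c) * f x ≤ 1 := by
        rw [div_mul_eq_mul_div, div_le_one hc0]
        linarith
      simp only [hg]
      linarith
    rw [e1, e2, Set.inter_comm G₀ G]
    linarith
  have hrG := risk G hG
  have hr0 := risk G₀ hG0'
  refine (ENNReal.toReal_le_toReal (measure_ne_top μ _) (measure_ne_top μ _)).1 ?_
  rw [hr0, hrG]
  linarith
end
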